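/- Let C be a non-redundant two-layer comparator network on n channels such that for every pair of distinct channels i, j, neither of which is used by a comparator of the second layer of C and which are not joined to each other by a first-layer comparator, the following hold: (i) both i and j are used by comparators of the first layer; (ii) i and j are both min-channels or both max-channels; and (iii) the channel joined to i by a first-layer comparator and the channel joined to j by a first-layer comparator are not joined to each other by a second-layer comparator. Then C is saturated. -/

import Mathlib

namespace SN

open scoped Classical

/-- A comparator on `n` channels: a pair of channels. -/
abbrev Comp (n : ℕ) := Fin n × Fin n

/-- A layer is a finite set of comparators. -/
abbrev Layer (n : ℕ) := Finset (Comp n)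

/-- A comparator network is a sequence (list) of layers; its depth is the length. -/
abbrev Net (n : ℕ) := List (Layer n)

/-- Each channel is used by at most one comparator of the layer. -/
def NoOverlap {n : ℕ} (L : Layer n) : Prop :=
  ∀ c ∈ L, ∀ c' ∈ L, c ≠ c' →
    c.1 ≠ c'.1 ∧ c.1 ≠ c'.2 ∧ c.2 ≠ c'.1 ∧ c.2 ≠ c'.2

/-- A (standard) layer: comparators `(i,j)` with `i < j`, channels pairwise disjoint. -/
def IsLayer {n : ℕ} (L : Layer n) : Prop :=
  (∀ c ∈ L, c.1 < c.2) ∧ NoOverlap L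

/-- A generalized layer: comparators `(i,j)` with `i ≠ j` allowed in any order. -/
def IsGenLayer {n : ℕ} (L : Layer n) : Prop :=
  (∀ c ∈ L, c.1 ≠ c.2) ∧ NoOverlap L

def IsNet {n : ℕ} (C : Net n) : Prop := ∀ L ∈ C, IsLayer L

def IsGenNet {n : ℕ} (C : Net n) : Prop := ∀ L ∈ C, IsGenLayer L

/-- Apply one layer to a Boolean vector: a comparator `(i,j)` puts the min
(`&&`) on channel `i` and the max (`||`) on channel `j`. -/
noncomputable def applyLayer {n : ℕ} (L : Layer n) (x : Fin n → Bool) : Fin n → Bool :=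
  fun k =>
    if h1 : ∃ c ∈ L, c.1 = k then x h1.choose.1 && x h1.choose.2
    else if h2 : ∃ c ∈ L, c.2 = k then x h2.choose.1 || x h2.choose.2
    else x k

/-- Run a comparator network on a Boolean input (layers applied in sequence). -/
noncomputable def run {n : ℕ} (C : Net n) (x : Fin n → Bool) : Fin n → Bool :=
  C.foldl (fun y L => applyLayer L y) x

/-- Ascendingly sorted Boolean vector. -/
def BSorted {n : ℕ} (x : Fin n → Bool) : Prop :=
  ∀ i j : Fin n, i ≤ j → x i ≤ x j

/-- A sorting network: a comparator network sorting every Boolean input. -/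
def IsSortingNet {n : ℕ} (C : Net n) : Prop :=
  IsNet C ∧ ∀ x : Fin n → Bool, BSorted (run C x)

/-- The set of outputs of a network on all Boolean inputs. -/
def outputs {n : ℕ} (C : Net n) : Set (Fin n → Bool) := Set.range (run C)

/-- Apply one layer to a vector of naturals. -/
noncomputable def applyLayerN {n : ℕ} (L : Layer n) (x : Fin n → ℕ) : Fin n → ℕ :=
  fun k =>
    if h1 : ∃ c ∈ L, c.1 = k then min (x h1.choose.1) (x h1.choose.2)
    else if h2 : ∃ c ∈ L, c.2 = k then max (x h2.choose.1) (x h2.choose.2)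
    else x k

noncomputable def runN {n : ℕ} (C : Net n) (x : Fin n → ℕ) : Fin n → ℕ :=
  C.foldl (fun y L => applyLayerN L y) x

def NSorted {n : ℕ} (x : Fin n → ℕ) : Prop :=
  ∀ i j : Fin n, i ≤ j → x i ≤ x j

/-- Permute the coordinates of a Boolean vector by `π` (channel `k`'s value
moves to channel `π k`). -/
def permVec {n : ℕ} (π : Equiv.Perm (Fin n)) (x : Fin n → Bool) : Fin n → Bool :=
  fun i => x (π.symm i)

/-- The image of a set of Boolean vectors under coordinate permutation by `π`. -/
def permSet {n : ℕ} (π : Equiv.Perm (Fin n)) (X : Set (Fin n → Bool)) :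
    Set (Fin n → Bool) :=
  permVec π '' X

/-- The image `π(L)` of a layer under a permutation of channels. -/
def permLayer {n : ℕ} (π : Equiv.Perm (Fin n)) (L : Layer n) : Layer n :=
  L.image fun c => (π c.1, π c.2)

/-- Channel `i` is used by some comparator of the layer `L`. -/
def usedIn {n : ℕ} (L : Layer n) (i : Fin n) : Prop := ∃ c ∈ L, c.1 = i ∨ c.2 = i

/-- Channels `i` and `j` are joined by a comparator of `L`. -/
def Joined {n : ℕ} (L : Layer n) (i j : Fin n) : Prop := (i, j) ∈ L ∨ (j, i) ∈ L

/-- `i` is the smaller channel of some comparator of `L` (a min-channel). -/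
def MinChan {n : ℕ} (L : Layer n) (i : Fin n) : Prop := ∃ c ∈ L, c.1 = i

/-- `i` is the larger channel of some comparator of `L` (a max-channel). -/
def MaxChan {n : ℕ} (L : Layer n) (i : Fin n) : Prop := ∃ c ∈ L, c.2 = i

/-- A two-layer network `[L1, L2]` is redundant if some comparator can be removed
so that the outputs of the result are a permutation of the original outputs. -/
def Redundant {n : ℕ} (L1 L2 : Layer n) : Prop :=
  ∃ π : Equiv.Perm (Fin n),
    (∃ c ∈ L1, outputs [L1.erase c, L2] = permSet π (outputs [L1, L2])) ∨
    (∃ c ∈ L2, outputs [L1, L2.erase c] = permSet π (outputs [L1, L2]))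

/-- A two-layer network `[L1, L2]` is saturated if it is non-redundant and no
comparator on two channels unused in the second layer can be added to the second
layer so as to make the output set a proper subset of a permutation of the
original output set. -/
def Saturated {n : ℕ} (L1 L2 : Layer n) : Prop :=
  ¬ Redundant L1 L2 ∧
  ¬ ∃ (c : Comp n) (π : Equiv.Perm (Fin n)),
      c.1 < c.2 ∧ ¬ usedIn L2 c.1 ∧ ¬ usedIn L2 c.2 ∧
      outputs [L1, insert c L2] ⊂ permSet π (outputs [L1, L2])

/-- Vertices of the graph representation of `C`: the comparators of `C`,
tagged with the index of the layer containing them. -/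
def Vertex {n : ℕ} (C : Net n) := {p : ℕ × Comp n // p.2 ∈ C.getD p.1 ∅}

/-- The channel carrying the min output (`b = false`, label 1) or max output
(`b = true`, label 2) of a comparator. -/
def outChan {n : ℕ} (c : Comp n) (b : Bool) : Fin n := if b then c.2 else c.1

/-- An edge with label `b` (1 for min, 2 for max) from comparator `u` to
comparator `v`: the corresponding output of `u` is an input of `v`, i.e. `v`
is the next comparator on that channel. -/
def Edge {n : ℕ} (C : Net n) (b : Bool) (u v : ℕ × Comp n) : Prop :=
  u.1 < v.1 ∧ (outChan u.2 b = v.2.1 ∨ outChan u.2 b = v.2.2) ∧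
  ∀ m, u.1 < m → m < v.1 → ¬ usedIn (C.getD m ∅) (outChan u.2 b)

/-- The graph representations of `C` and `D` are isomorphic: a bijection of
comparators preserving the labeled edges. -/
def GraphIso {n m : ℕ} (C : Net n) (D : Net m) : Prop :=
  ∃ f : Vertex C ≃ Vertex D,
    ∀ (b : Bool) (u v : Vertex C),
      Edge C b u.val v.val ↔ Edge D b (f u).val (f v).val

/-- The graph representation of `C` is connected. -/
def GraphConnected {n : ℕ} (C : Net n) : Prop :=
  ∀ u v : Vertex C,
    Relation.ReflTransGen
      (fun a b : Vertex C => ∃ ℓ : Bool, Edge C ℓ a.val b.val ∨ Edge C ℓ b.val a.val) u v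

/-- Reflection of a comparator: `(i,j) ↦ (n-j+1, n-i+1)` (in 1-based terms). -/
def reflectComp {n : ℕ} (c : Comp n) : Comp n := (c.2.rev, c.1.rev)

def reflectLayer {n : ℕ} (L : Layer n) : Layer n := L.image reflectComp

/-- Reflection `C^R` of a comparator network. -/
def reflect {n : ℕ} (C : Net n) : Net n := C.map reflectLayer

/-- The first layer `F_n = {(2i-1, 2i) : 1 ≤ i ≤ ⌊n/2⌋}` (0-indexed: `(2i, 2i+1)`). -/
def FLayer (n : ℕ) : Layer n :=
  Finset.univ.filter fun c : Comp n => c.1.val % 2 = 0 ∧ c.2.val = c.1.val + 1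

/-- The two-layer networks with first layer `F_n`, parametrized by second layer. -/
def SecondLayers (n : ℕ) := {L : Layer n // IsLayer L}

/-- The number `|R(G_n)|` of equivalence classes of two-layer networks with
first layer `F_n`, under graph isomorphism `≈`. -/
noncomputable def numClasses (n : ℕ) : ℕ :=
  Nat.card (Quot fun L L' : SecondLayers n =>
    GraphIso ([FLayer n, L.val] : Net n) ([FLayer n, L'.val] : Net n))

/-- Redundant two-layer networks with first layer `F_n`. -/
def RedLayers (n : ℕ) := {L : Layer n // IsLayer L ∧ Redundant (FLayer n) L}

/-- The number of equivalence classes of redundant two-layer networks with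
first layer `F_n`, under graph isomorphism `≈`. -/
noncomputable def numRedClasses (n : ℕ) : ℕ :=
  Nat.card (Quot fun L L' : RedLayers n =>
    GraphIso ([FLayer n, L.val] : Net n) ([FLayer n, L'.val] : Net n))

/-!
If the added comparator `(i, j)` is a first-layer comparator, it never swaps anything and the
outputs do not change. Otherwise `i` and `j` are, say, both min-channels, with first-layer partners
`i'` and `j'`; max-channels reduce to this case by complementing all bits and reversing all
comparators. Look at the outputs with exactly two ones. The added comparator changes only the
output of the input with ones on `i` and `i'`, moving its one from `i` to `j`. Afterwards no
weight-two output has a one on `i` and no new channel is covered, so the weight-two outputs cover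
fewer channels than before. As `i'` and `j'` are not joined in the second layer, the changed output
differs from all the others, so the number of weight-two outputs is unchanged. A permutation
mapping the new outputs into the old ones would then map the weight-two outputs bijectively and
preserve the number of channels they cover.
-/

section Layers

variable {n : ℕ} {L : Layer n}

theorem IsLayer.isGenLayer (hL : IsLayer L) : IsGenLayer L :=
  ⟨fun c hc => (hL.1 c hc).ne, hL.2⟩

theorem NoOverlap.eq_of_fst_eq (hL : NoOverlap L) {c d : Comp n} (hc : c ∈ L) (hd : d ∈ L)
    (h : c.1 = d.1) : c = d :=
  by_contra fun hne => (hL c hc d hd hne).1 h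

theorem NoOverlap.eq_of_snd_eq (hL : NoOverlap L) {c d : Comp n} (hc : c ∈ L) (hd : d ∈ L)
    (h : c.2 = d.2) : c = d :=
  by_contra fun hne => (hL c hc d hd hne).2.2.2 h

theorem IsGenLayer.fst_ne_snd (hL : IsGenLayer L) {c d : Comp n} (hc : c ∈ L) (hd : d ∈ L) :
    c.1 ≠ d.2 := by
  intro h
  by_cases hcd : c = d
  · exact hL.1 d hd (hcd ▸ h)
  · exact (hL.2 c hc d hd hcd).2.1 h

theorem IsGenLayer.mono {L' : Layer n} (hL' : IsGenLayer L') (h : L ⊆ L') : IsGenLayer L :=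
  ⟨fun c hc => hL'.1 c (h hc), fun c hc d hd => hL'.2 c (h hc) d (h hd)⟩

theorem isGenLayer_insert (hL : IsGenLayer L) {c : Comp n} (hc : c.1 ≠ c.2)
    (h1 : ¬ usedIn L c.1) (h2 : ¬ usedIn L c.2) : IsGenLayer (insert c L) := by
  refine ⟨fun d hd => ?_, fun d hd e he hde => ?_⟩
  · rcases Finset.mem_insert.1 hd with rfl | hd
    exacts [hc, hL.1 d hd]
  rcases Finset.mem_insert.1 hd with hdc | hdL <;> rcases Finset.mem_insert.1 he with hec | heL
  · exact absurd (hdc.trans hec.symm) hde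
  · subst hdc
    exact ⟨fun h => h1 ⟨e, heL, .inl h.symm⟩, fun h => h1 ⟨e, heL, .inr h.symm⟩,
      fun h => h2 ⟨e, heL, .inl h.symm⟩, fun h => h2 ⟨e, heL, .inr h.symm⟩⟩
  · subst hec
    exact ⟨fun h => h1 ⟨d, hdL, .inl h⟩, fun h => h2 ⟨d, hdL, .inl h⟩,
      fun h => h1 ⟨d, hdL, .inr h⟩, fun h => h2 ⟨d, hdL, .inr h⟩⟩
  · exact hL.2 d hdL e heL hde

theorem IsGenLayer.not_usedIn_of_insert {c : Comp n} (hL : IsGenLayer (insert c L))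
    (hc : c ∉ L) : ¬ usedIn L c.1 ∧ ¬ usedIn L c.2 := by
  have hne : ∀ d ∈ L, d ≠ c := fun d hd h => hc (h ▸ hd)
  have hcL := Finset.mem_insert_self c L
  constructor <;> rintro ⟨d, hd, h | h⟩
  · exact hne d hd (hL.2.eq_of_fst_eq (Finset.mem_insert_of_mem hd) hcL h)
  · exact hL.fst_ne_snd hcL (Finset.mem_insert_of_mem hd) h.symm
  · exact hL.fst_ne_snd (Finset.mem_insert_of_mem hd) hcL h
  · exact hne d hd (hL.2.eq_of_snd_eq (Finset.mem_insert_of_mem hd) hcL h)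

theorem isGenNet_pair {L1 L2 : Layer n} (hL1 : IsGenLayer L1) (hL2 : IsGenLayer L2) :
    IsGenNet [L1, L2] := by
  intro L hL
  simp only [List.mem_cons, List.not_mem_nil, or_false] at hL
  rcases hL with rfl | rfl
  exacts [hL1, hL2]

theorem joined_comm {a b : Fin n} : Joined L a b ↔ Joined L b a := Or.comm

theorem Joined.usedIn_left {a b : Fin n} (h : Joined L a b) : usedIn L a :=
  h.elim (fun h => ⟨_, h, .inl rfl⟩) (fun h => ⟨_, h, .inr rfl⟩)

theorem IsGenLayer.joined_fst_iff (hL : IsGenLayer L) {a b t : Fin n} (hab : (a, b) ∈ L) :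
    Joined L a t ↔ t = b := by
  refine ⟨fun h => ?_, fun h => h ▸ .inl hab⟩
  rcases h with h | h
  · exact (Prod.mk.inj (hL.2.eq_of_fst_eq h hab rfl)).2
  · exact absurd rfl (hL.fst_ne_snd hab h)

theorem IsGenLayer.joined_snd_iff (hL : IsGenLayer L) {a b t : Fin n} (hab : (a, b) ∈ L) :
    Joined L b t ↔ t = a := by
  refine ⟨fun h => ?_, fun h => h ▸ .inr hab⟩
  rcases h with h | h
  · exact absurd rfl (hL.fst_ne_snd h hab)
  · exact (Prod.mk.inj (hL.2.eq_of_snd_eq h hab rfl)).1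

end Layers

section Evaluation

variable {n : ℕ} {L : Layer n} {a b k : Fin n}

theorem applyLayer_fst (hL : NoOverlap L) (hab : (a, b) ∈ L) (x : Fin n → Bool) :
    applyLayer L x a = (x a && x b) := by
  have h : ∃ c ∈ L, c.1 = a := ⟨_, hab, rfl⟩
  simp only [applyLayer, dif_pos h, hL.eq_of_fst_eq h.choose_spec.1 hab h.choose_spec.2]

theorem applyLayer_snd (hL : IsGenLayer L) (hab : (a, b) ∈ L) (x : Fin n → Bool) :
    applyLayer L x b = (x a || x b) := by
  have h1 : ¬ ∃ c ∈ L, c.1 = b := fun ⟨c, hc, h⟩ => hL.fst_ne_snd hc hab h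
  have h2 : ∃ c ∈ L, c.2 = b := ⟨_, hab, rfl⟩
  simp only [applyLayer, dif_neg h1, dif_pos h2,
    hL.2.eq_of_snd_eq h2.choose_spec.1 hab h2.choose_spec.2]

theorem applyLayer_of_not_usedIn (hk : ¬ usedIn L k) (x : Fin n → Bool) :
    applyLayer L x k = x k := by
  have h1 : ¬ ∃ c ∈ L, c.1 = k := fun ⟨c, hc, h⟩ => hk ⟨c, hc, .inl h⟩
  have h2 : ¬ ∃ c ∈ L, c.2 = k := fun ⟨c, hc, h⟩ => hk ⟨c, hc, .inr h⟩
  simp only [applyLayer, dif_neg h1, dif_neg h2]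

theorem applyLayer_empty (x : Fin n → Bool) : applyLayer (∅ : Layer n) x = x :=
  funext fun _ => applyLayer_of_not_usedIn (by simp [usedIn]) x

theorem run_cons (C : Net n) (x : Fin n → Bool) :
    run (L :: C) x = run C (applyLayer L x) := rfl

theorem run_pair (L1 L2 : Layer n) (x : Fin n → Bool) :
    run [L1, L2] x = applyLayer L2 (applyLayer L1 x) := rfl

theorem run_pair_of_not_usedIn (L1 : Layer n) (hk : ¬ usedIn L k) (x : Fin n → Bool) :
    run [L1, L] x k = applyLayer L1 x k :=
  applyLayer_of_not_usedIn hk _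

theorem applyLayer_of_sorted (hL : IsGenLayer L) {x : Fin n → Bool}
    (hx : ∀ c ∈ L, x c.1 = true → x c.2 = true) : applyLayer L x = x := by
  funext k
  by_cases hk : usedIn L k
  · obtain ⟨⟨a, b⟩, hab, rfl | rfl⟩ := hk
    · rw [applyLayer_fst hL.2 hab]
      cases ha : x a
      · rfl
      · simp [hx _ hab ha]
    · rw [applyLayer_snd hL hab]
      cases ha : x a
      · rfl
      · simp [hx _ hab ha]
  · exact applyLayer_of_not_usedIn hk x

theorem applyLayer_insert_of_ne {c : Comp n} (hL : IsGenLayer (insert c L)) (hk1 : k ≠ c.1)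
    (hk2 : k ≠ c.2) (x : Fin n → Bool) : applyLayer (insert c L) x k = applyLayer L x k := by
  have hL' := hL.mono (Finset.subset_insert c L)
  by_cases hk : usedIn L k
  · obtain ⟨⟨a, b⟩, hab, rfl | rfl⟩ := hk
    · rw [applyLayer_fst hL.2 (Finset.mem_insert_of_mem hab), applyLayer_fst hL'.2 hab]
    · rw [applyLayer_snd hL (Finset.mem_insert_of_mem hab), applyLayer_snd hL' hab]
  · have hk' : ¬ usedIn (insert c L) k := by
      rintro ⟨d, hd, hdk⟩
      rcases Finset.mem_insert.1 hd with rfl | hd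
      · exact hdk.elim (hk1 ·.symm) (hk2 ·.symm)
      · exact hk ⟨d, hd, hdk⟩
    rw [applyLayer_of_not_usedIn hk', applyLayer_of_not_usedIn hk]

theorem applyLayer_insert_of_sorted (hL : IsGenLayer L) (hab : a ≠ b) (ha : ¬ usedIn L a)
    (hb : ¬ usedIn L b) {x : Fin n → Bool} (hx : x a = true → x b = true) :
    applyLayer (insert (a, b) L) x = applyLayer L x := by
  have hL' := isGenLayer_insert (c := (a, b)) hL hab ha hb
  have hmem := Finset.mem_insert_self (a, b) L
  funext k
  by_cases hka : k = a
  · subst hka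
    rw [applyLayer_fst hL'.2 hmem, applyLayer_of_not_usedIn ha]
    cases h : x k <;> simp [hx, h]
  by_cases hkb : k = b
  · subst hkb
    rw [applyLayer_snd hL' hmem, applyLayer_of_not_usedIn hb]
    cases h : x a <;> simp [hx, h]
  exact applyLayer_insert_of_ne hL' hka hkb x

end Evaluation

section Weight

variable {n : ℕ}

def weight (x : Fin n → Bool) : ℕ := ∑ k, (x k).toNat

def charVec (s : Finset (Fin n)) : Fin n → Bool := fun k => decide (k ∈ s)

theorem weight_permVec (π : Equiv.Perm (Fin n)) (x : Fin n → Bool) :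
    weight (permVec π x) = weight x :=
  Equiv.sum_comp π.symm fun k => (x k).toNat

theorem weight_eq_of_comparator {y z : Fin n → Bool} {s t : Fin n} (hst : s ≠ t)
    (hs : y s = (z s && z t)) (ht : y t = (z s || z t))
    (hk : ∀ k, k ≠ s → k ≠ t → y k = z k) : weight y = weight z := by
  have hrest : ∑ k ∈ {s, t}ᶜ, (y k).toNat = ∑ k ∈ {s, t}ᶜ, (z k).toNat :=
    Finset.sum_congr rfl fun k hk' => by
      simp only [Finset.mem_compl, Finset.mem_insert, Finset.mem_singleton, not_or] at hk'
      rw [hk k hk'.1 hk'.2]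
  rw [weight, weight, ← Finset.sum_add_sum_compl {s, t}, hrest,
    ← Finset.sum_add_sum_compl {s, t} (fun k => (z k).toNat), Finset.sum_pair hst,
    Finset.sum_pair hst, hs, ht]
  cases z s <;> cases z t <;> rfl

theorem weight_applyLayer {L : Layer n} (hL : IsGenLayer L) (x : Fin n → Bool) :
    weight (applyLayer L x) = weight x := by
  induction L using Finset.induction_on with
  | empty => rw [applyLayer_empty]
  | insert d L hd ih =>
    have hL' := hL.mono (Finset.subset_insert d L)
    obtain ⟨h1, h2⟩ := hL.not_usedIn_of_insert hd
    have hmem := Finset.mem_insert_self d L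
    rw [← ih hL']
    refine weight_eq_of_comparator (hL.1 d hmem) ?_ ?_
      fun k hk1 hk2 => applyLayer_insert_of_ne hL hk1 hk2 x
    · rw [applyLayer_fst hL.2 hmem, applyLayer_of_not_usedIn h1, applyLayer_of_not_usedIn h2]
    · rw [applyLayer_snd hL hmem, applyLayer_of_not_usedIn h1, applyLayer_of_not_usedIn h2]

theorem weight_run {C : Net n} (hC : IsGenNet C) (x : Fin n → Bool) :
    weight (run C x) = weight x := by
  induction C generalizing x with
  | nil => rfl
  | cons L C ih =>
    rw [run_cons, ih (fun L' h => hC L' (List.mem_cons_of_mem L h)),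
      weight_applyLayer (hC L List.mem_cons_self)]

theorem weight_charVec (s : Finset (Fin n)) : weight (charVec s) = s.card := by
  simp [weight, charVec, Bool.toNat, Bool.cond_decide]

theorem eq_charVec_pair {x : Fin n → Bool} {s t : Fin n} (hx : weight x = 2) (hst : s ≠ t)
    (hs : x s = true) (ht : x t = true) : x = charVec {s, t} := by
  have hrest : ∑ k ∈ {s, t}ᶜ, (x k).toNat = 0 := by
    rw [weight, ← Finset.sum_add_sum_compl {s, t}, Finset.sum_pair hst, hs, ht] at hx
    simpa using hx
  funext k
  by_cases hk : k ∈ ({s, t} : Finset (Fin n))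
  · simp only [Finset.mem_insert, Finset.mem_singleton] at hk
    rcases hk with rfl | rfl <;> simp [charVec, hs, ht]
  · have := Finset.sum_eq_zero_iff.1 hrest k (Finset.mem_compl.2 hk)
    simpa [charVec, hk] using this

theorem applyLayer_charVec_of_mem {L : Layer n} (hL : IsGenLayer L) {a b : Fin n}
    (hab : (a, b) ∈ L) : applyLayer L (charVec {a, b}) = charVec {a, b} := by
  refine applyLayer_of_sorted hL fun c hc h => ?_
  simp only [charVec, decide_eq_true_eq, Finset.mem_insert, Finset.mem_singleton] at h ⊢
  rcases h with h | h
  · exact .inr (Prod.mk.inj (hL.2.eq_of_fst_eq hc hab h)).2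
  · exact absurd h (hL.fst_ne_snd hc hab)

end Weight

section Exchange

variable {n : ℕ}

theorem permVec_injective (π : Equiv.Perm (Fin n)) : Function.Injective (permVec π) :=
  fun x y h => funext fun k => by simpa [permVec] using congrFun h (π k)

theorem ncard_permSet (π : Equiv.Perm (Fin n)) (X : Set (Fin n → Bool)) :
    (permSet π X).ncard = X.ncard :=
  Set.ncard_image_of_injective X (permVec_injective π)

theorem not_ssubset_permSet (π : Equiv.Perm (Fin n)) (X : Set (Fin n → Bool)) :
    ¬ X ⊂ permSet π X :=
  fun h => (Set.ncard_lt_ncard h (Set.toFinite _)).ne (ncard_permSet π X).symm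

def supp (A : Set (Fin n → Bool)) : Set (Fin n) := {k | ∃ z ∈ A, z k = true}

theorem supp_permSet (π : Equiv.Perm (Fin n)) (A : Set (Fin n → Bool)) :
    supp (permSet π A) = π '' supp A := by
  ext k
  simp only [supp, permSet, Set.mem_image, Set.mem_ofPred_eq]
  constructor
  · rintro ⟨_, ⟨z, hz, rfl⟩, hk⟩
    exact ⟨π.symm k, ⟨z, hz, hk⟩, π.apply_symm_apply k⟩
  · rintro ⟨v, ⟨z, hz, hv⟩, rfl⟩
    exact ⟨_, ⟨z, hz, rfl⟩, by simp [permVec, hv]⟩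

theorem ncard_supp_eq_of_subset_permSet {π : Equiv.Perm (Fin n)} {A B : Set (Fin n → Bool)}
    (hBA : B ⊆ permSet π A) (hcard : A.ncard ≤ B.ncard) : (supp B).ncard = (supp A).ncard := by
  have hB : B = permSet π A :=
    Set.eq_of_subset_of_ncard_le hBA (by rwa [ncard_permSet]) (Set.toFinite _)
  rw [hB, supp_permSet, Set.ncard_image_of_injective _ π.injective]

theorem range_inter_weight_eq_insert {F : (Fin n → Bool) → Fin n → Bool}
    (hF : ∀ x, weight (F x) = weight x) {m : ℕ} {x0 : Fin n → Bool} (hx0 : weight x0 = m) :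
    Set.range F ∩ {z | weight z = m} = insert (F x0) (F '' ({x | weight x = m} \ {x0})) := by
  have hrange : Set.range F ∩ {z | weight z = m} = F '' {x | weight x = m} := by
    ext z
    simp only [Set.mem_inter_iff, Set.mem_range, Set.mem_ofPred_eq, Set.mem_image]
    exact ⟨fun ⟨⟨x, hx⟩, hz⟩ => ⟨x, by rwa [← hF, hx], hx⟩,
      fun ⟨x, hxm, hx⟩ => ⟨⟨x, hx⟩, by rwa [← hx, hF]⟩⟩
  rw [hrange, ← Set.image_insert_eq, Set.insert_sdiff_singleton,
    Set.insert_eq_of_mem (s := {x | weight x = m}) hx0]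

/-- The weight-two outputs of `G` are those of `F` with `F x0` exchanged for `G x0`. This keeps
their number but uncovers channel `k`, whereas a permutation mapping `range G` into `range F`
would map the weight-two outputs bijectively and preserve the number of channels they cover. -/
theorem not_range_subset_permSet_of_exchange {F G : (Fin n → Bool) → Fin n → Bool}
    {x0 : Fin n → Bool} {k : Fin n} (π : Equiv.Perm (Fin n))
    (hF : ∀ x, weight (F x) = weight x) (hG : ∀ x, weight (G x) = weight x)
    (hx0 : weight x0 = 2) (hFG : ∀ x, weight x = 2 → x ≠ x0 → G x = F x)
    (hnew : ∀ x, weight x = 2 → F x = G x0 → x = x0)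
    (hcover : ∀ v, G x0 v = true → ∃ x, weight x = 2 ∧ F x v = true)
    (hFk : F x0 k = true) (hGk : G x0 k = false)
    (honly : ∀ x, weight x = 2 → F x k = true → x = x0) :
    ¬ Set.range G ⊆ permSet π (Set.range F) := by
  intro hsub
  set S := {x : Fin n → Bool | weight x = 2}
  set W := F '' (S \ {x0})
  have hA := range_inter_weight_eq_insert hF hx0
  have hB : Set.range G ∩ S = insert (G x0) W := by
    rw [range_inter_weight_eq_insert hG hx0, Set.image_congr fun x hx => hFG x hx.1 hx.2]
  have hGW : G x0 ∉ W := fun ⟨x, ⟨hxS, hx⟩, hFx⟩ => hx (hnew x hxS hFx)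
  have hBA : Set.range G ∩ S ⊆ permSet π (Set.range F ∩ S) := by
    rintro _ ⟨hz, hzS⟩
    obtain ⟨y, hy, rfl⟩ := hsub hz
    exact ⟨y, ⟨hy, by rwa [Set.mem_ofPred_eq, ← weight_permVec π]⟩, rfl⟩
  have hcard : (Set.range F ∩ S).ncard ≤ (Set.range G ∩ S).ncard := by
    rw [hA, hB, Set.ncard_insert_of_notMem hGW]
    exact Set.ncard_insert_le _ _
  have hsupp : supp (Set.range G ∩ S) ⊂ supp (Set.range F ∩ S) := by
    refine (Set.ssubset_iff_of_subset ?_).2 ⟨k, ⟨F x0, hA ▸ Set.mem_insert _ _, hFk⟩, ?_⟩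
    · rintro v ⟨z, hz, hzv⟩
      rw [hB] at hz
      rcases hz with rfl | hz
      · obtain ⟨x, hx, hxv⟩ := hcover v hzv
        exact ⟨F x, ⟨⟨x, rfl⟩, by rwa [Set.mem_ofPred_eq, hF]⟩, hxv⟩
      · exact ⟨z, hA ▸ Set.mem_insert_of_mem _ hz, hzv⟩
    · rintro ⟨z, hz, hzk⟩
      rw [hB] at hz
      rcases hz with rfl | ⟨x, ⟨hxS, hx⟩, rfl⟩
      · exact absurd hzk (by simp [hGk])
      · exact hx (honly x hxS hzk)
  exact (Set.ncard_lt_ncard hsupp (Set.toFinite _)).ne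
    (ncard_supp_eq_of_subset_permSet hBA hcard)

end Exchange

section MinChannels

variable {n : ℕ}

/-- `m` is the channel on which a one entering `L` alone on channel `s` leaves it. -/
theorem IsGenLayer.exists_exit {L : Layer n} (hL : IsGenLayer L) (s : Fin n) :
    ∃ m, (m = s ∨ usedIn L m) ∧
      ∀ y, applyLayer L y m = true ↔ (y s = true ∨ ∃ t, Joined L s t ∧ y t = true) := by
  by_cases hs : usedIn L s
  · obtain ⟨⟨a, b⟩, hab, rfl | rfl⟩ := hs
    · refine ⟨b, .inr ⟨_, hab, .inr rfl⟩, fun y => ?_⟩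
      simp [applyLayer_snd hL hab, hL.joined_fst_iff hab]
    · refine ⟨b, .inr ⟨_, hab, .inr rfl⟩, fun y => ?_⟩
      simp [applyLayer_snd hL hab, hL.joined_snd_iff hab, or_comm]
  · refine ⟨s, .inl rfl, fun y => ?_⟩
    rw [applyLayer_of_not_usedIn hs]
    exact ⟨.inl, by rintro (h | ⟨t, ht, -⟩); exacts [h, absurd ht.usedIn_left hs]⟩

theorem exists_exit_of_minChan {L1 L2 : Layer n} {i j i' j' : Fin n}
    (hL1 : IsGenLayer L1) (hL2 : IsGenLayer L2) (hij : i ≠ j)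
    (hi : ¬ usedIn L2 i) (hj : ¬ usedIn L2 j) (hii' : (i, i') ∈ L1) (hjj' : (j, j') ∈ L1)
    (hsep : ¬ Joined L2 i' j') :
    ∃ m, m ≠ j ∧ run [L1, L2] (charVec {i, i'}) m = true ∧
      run [L1, insert (i, j) L2] (charVec {i, i'}) = charVec {j, m} ∧
      run [L1, L2] (charVec {j, j'}) m = false := by
  have hL2' := isGenLayer_insert (c := (i, j)) hL2 hij hi hj
  have hii'ne : i ≠ i' := hL1.1 _ hii'
  have hji' : j ≠ i' := hL1.fst_ne_snd hjj' hii'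
  have hi'j' : i' ≠ j' := fun h => hij (Prod.mk.inj (hL1.2.eq_of_snd_eq hii' hjj' h)).1
  obtain ⟨m, hm, hmval⟩ := hL2.exists_exit i'
  have hmi : m ≠ i := by rintro rfl; exact hm.elim hii'ne hi
  have hmj : m ≠ j := by rintro rfl; exact hm.elim hji' hj
  have hFm : run [L1, L2] (charVec {i, i'}) m = true := by
    rw [run_pair, applyLayer_charVec_of_mem hL1 hii', hmval]
    simp [charVec]
  refine ⟨m, hmj, hFm, ?_, ?_⟩
  · rw [run_pair, applyLayer_charVec_of_mem hL1 hii']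
    refine eq_charVec_pair ?_ hmj.symm ?_ ?_
    · rw [weight_applyLayer hL2', weight_charVec, Finset.card_pair hii'ne]
    · simp [applyLayer_snd hL2' (Finset.mem_insert_self _ _), charVec]
    · rwa [applyLayer_insert_of_ne hL2' hmi hmj, ← applyLayer_charVec_of_mem hL1 hii']
  · rw [run_pair, applyLayer_charVec_of_mem hL1 hjj', Bool.eq_false_iff, ne_eq, hmval]
    rintro (h | ⟨t, ht, hwt⟩)
    · simp [charVec, hji'.symm, hi'j'] at h
    · simp only [charVec, decide_eq_true_eq, Finset.mem_insert, Finset.mem_singleton] at hwt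
      rcases hwt with rfl | rfl
      exacts [hj (joined_comm.1 ht).usedIn_left, hsep ht]

theorem not_outputs_insert_subset_of_minChan {L1 L2 : Layer n} {i j i' j' : Fin n}
    (hL1 : IsGenLayer L1) (hL2 : IsGenLayer L2) (hij : i ≠ j)
    (hi : ¬ usedIn L2 i) (hj : ¬ usedIn L2 j) (hii' : (i, i') ∈ L1) (hjj' : (j, j') ∈ L1)
    (hsep : ¬ Joined L2 i' j') (π : Equiv.Perm (Fin n)) :
    ¬ outputs [L1, insert (i, j) L2] ⊆ permSet π (outputs [L1, L2]) := by
  have hL2' := isGenLayer_insert (c := (i, j)) hL2 hij hi hj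
  have hii'ne : i ≠ i' := hL1.1 _ hii'
  have hjj'ne : j ≠ j' := hL1.1 _ hjj'
  have hji' : j ≠ i' := hL1.fst_ne_snd hjj' hii'
  obtain ⟨m, hmj, hFm, hGx0, hFwm⟩ := exists_exit_of_minChan hL1 hL2 hij hi hj hii' hjj' hsep
  have hFi (x) : run [L1, L2] x i = (x i && x i') := by
    rw [run_pair_of_not_usedIn L1 hi, applyLayer_fst hL1.2 hii']
  have hFj (x) : run [L1, L2] x j = (x j && x j') := by
    rw [run_pair_of_not_usedIn L1 hj, applyLayer_fst hL1.2 hjj']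
  have hx0 (x) (hx : weight x = 2) (h : run [L1, L2] x i = true) : x = charVec {i, i'} := by
    rw [hFi, Bool.and_eq_true] at h
    exact eq_charVec_pair hx hii'ne h.1 h.2
  refine not_range_subset_permSet_of_exchange (x0 := charVec {i, i'}) (k := i) π
    (weight_run (isGenNet_pair hL1 hL2)) (weight_run (isGenNet_pair hL1 hL2'))
    (by rw [weight_charVec, Finset.card_pair hii'ne]) (fun x hx hne => ?_) (fun x hx hFx => ?_)
    (fun v hv => ?_) (by simp [hFi, charVec]) ?_ hx0
  · refine applyLayer_insert_of_sorted hL2 hij hi hj fun h => absurd (hx0 x hx ?_) hne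
    rwa [hFi, ← applyLayer_fst hL1.2 hii']
  · have h : run [L1, L2] x j = true := by simp [hFx, hGx0, charVec]
    rw [hFj, Bool.and_eq_true] at h
    obtain rfl := eq_charVec_pair hx hjj'ne h.1 h.2
    simpa [hFwm, hGx0, charVec] using congrFun hFx m
  · simp only [hGx0, charVec, decide_eq_true_eq, Finset.mem_insert, Finset.mem_singleton] at hv
    rcases hv with rfl | rfl
    · exact ⟨_, by rw [weight_charVec, Finset.card_pair hjj'ne], by simp [hFj, charVec]⟩
    · exact ⟨_, by rw [weight_charVec, Finset.card_pair hii'ne], hFm⟩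
  · rw [run_pair, applyLayer_charVec_of_mem hL1 hii',
      applyLayer_fst hL2'.2 (Finset.mem_insert_self _ _)]
    simp [charVec, hij.symm, hji']

end MinChannels

section Duality

variable {n : ℕ}

def swapLayer (L : Layer n) : Layer n := L.image Prod.swap

theorem mem_swapLayer {L : Layer n} {a b : Fin n} : (a, b) ∈ swapLayer L ↔ (b, a) ∈ L := by
  simp [swapLayer]

theorem usedIn_swapLayer {L : Layer n} {k : Fin n} : usedIn (swapLayer L) k ↔ usedIn L k := by
  constructor
  · rintro ⟨⟨a, b⟩, hab, h⟩
    exact ⟨(b, a), mem_swapLayer.1 hab, h.symm⟩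
  · rintro ⟨⟨a, b⟩, hab, h⟩
    exact ⟨(b, a), mem_swapLayer.2 hab, h.symm⟩

theorem joined_swapLayer {L : Layer n} {a b : Fin n} :
    Joined (swapLayer L) a b ↔ Joined L a b := by
  simp only [Joined, mem_swapLayer, or_comm]

theorem swapLayer_insert (L : Layer n) (a b : Fin n) :
    swapLayer (insert (a, b) L) = insert (b, a) (swapLayer L) :=
  Finset.image_insert _ _ _

theorem IsGenLayer.swapLayer {L : Layer n} (hL : IsGenLayer L) : IsGenLayer (swapLayer L) := by
  simp only [IsGenLayer, NoOverlap, SN.swapLayer, Finset.mem_image]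
  refine ⟨?_, ?_⟩
  · rintro _ ⟨c, hc, rfl⟩
    exact (hL.1 c hc).symm
  · rintro _ ⟨c, hc, rfl⟩ _ ⟨d, hd, rfl⟩ hcd
    obtain ⟨h11, h12, h21, h22⟩ := hL.2 c hc d hd (fun h => hcd (h ▸ rfl))
    exact ⟨h22, h21, h12, h11⟩

theorem applyLayer_swapLayer {L : Layer n} (hL : IsGenLayer L) (x : Fin n → Bool) :
    applyLayer (swapLayer L) xᶜ = (applyLayer L x)ᶜ := by
  have hL' := hL.swapLayer
  funext k
  by_cases hk : usedIn L k
  · obtain ⟨⟨a, b⟩, hab, rfl | rfl⟩ := hk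
    · change applyLayer (swapLayer L) xᶜ a = (applyLayer L x a)ᶜ
      rw [applyLayer_snd hL' (mem_swapLayer.2 hab), applyLayer_fst hL.2 hab]
      simp only [Pi.compl_apply]
      cases x a <;> cases x b <;> rfl
    · change applyLayer (swapLayer L) xᶜ b = (applyLayer L x b)ᶜ
      rw [applyLayer_fst hL'.2 (mem_swapLayer.2 hab), applyLayer_snd hL hab]
      simp only [Pi.compl_apply]
      cases x a <;> cases x b <;> rfl
  · rw [Pi.compl_apply, applyLayer_of_not_usedIn (usedIn_swapLayer.not.2 hk),
      applyLayer_of_not_usedIn hk, Pi.compl_apply]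

theorem run_map_swapLayer {C : Net n} (hC : IsGenNet C) (x : Fin n → Bool) :
    run (C.map swapLayer) xᶜ = (run C x)ᶜ := by
  induction C generalizing x with
  | nil => rfl
  | cons L C ih =>
    rw [List.map_cons, run_cons, run_cons, applyLayer_swapLayer (hC L List.mem_cons_self),
      ih (fun L' h => hC L' (List.mem_cons_of_mem L h))]

theorem outputs_map_swapLayer {C : Net n} (hC : IsGenNet C) :
    outputs (C.map swapLayer) = compl '' outputs C := by
  rw [outputs, outputs, ← Set.range_comp, ← compl_surjective.range_comp]
  exact congrArg Set.range (funext (run_map_swapLayer hC))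

theorem permSet_image_compl (π : Equiv.Perm (Fin n)) (X : Set (Fin n → Bool)) :
    permSet π (compl '' X) = compl '' permSet π X := by
  simp only [permSet, Set.image_image]
  rfl

theorem not_outputs_insert_subset_of_maxChan {L1 L2 : Layer n} {i j i' j' : Fin n}
    (hL1 : IsGenLayer L1) (hL2 : IsGenLayer L2) (hij : i ≠ j)
    (hi : ¬ usedIn L2 i) (hj : ¬ usedIn L2 j) (hi'i : (i', i) ∈ L1) (hj'j : (j', j) ∈ L1)
    (hsep : ¬ Joined L2 i' j') (π : Equiv.Perm (Fin n)) :
    ¬ outputs [L1, insert (i, j) L2] ⊆ permSet π (outputs [L1, L2]) := by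
  intro hsub
  refine not_outputs_insert_subset_of_minChan hL1.swapLayer hL2.swapLayer hij.symm
    (usedIn_swapLayer.not.2 hj) (usedIn_swapLayer.not.2 hi) (mem_swapLayer.2 hj'j)
    (mem_swapLayer.2 hi'i) (by rwa [joined_swapLayer, joined_comm]) π ?_
  have hout := outputs_map_swapLayer
    (isGenNet_pair hL1 (isGenLayer_insert (c := (i, j)) hL2 hij hi hj))
  have hout' := outputs_map_swapLayer (isGenNet_pair hL1 hL2)
  simp only [List.map_cons, List.map_nil, swapLayer_insert] at hout hout'
  rw [hout, hout', permSet_image_compl]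
  exact Set.image_mono hsub

end Duality

theorem outputs_insert_of_mem {n : ℕ} {L1 L2 : Layer n} {a b : Fin n} (hL1 : IsGenLayer L1)
    (hL2 : IsGenLayer L2) (hab : (a, b) ∈ L1) (ha : ¬ usedIn L2 a) (hb : ¬ usedIn L2 b) :
    outputs [L1, insert (a, b) L2] = outputs [L1, L2] := by
  refine congrArg Set.range (funext fun x => ?_)
  refine applyLayer_insert_of_sorted hL2 (hL1.1 _ hab) ha hb fun h => ?_
  rw [applyLayer_fst hL1.2 hab, Bool.and_eq_true] at h
  rw [applyLayer_snd hL1 hab, h.1, Bool.true_or]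

/-- a non-redundant two-layer network satisfying conditions
(i)-(iii) for every pair of channels unused in the second layer and not joined
in the first layer is saturated. -/
theorem saturated_of_no_patterns {n : ℕ} (L1 L2 : Layer n)
    (h1 : IsLayer L1) (h2 : IsLayer L2) (hnr : ¬ Redundant L1 L2)
    (h : ∀ i j : Fin n, i ≠ j → ¬ usedIn L2 i → ¬ usedIn L2 j →
      ¬ Joined L1 i j →
      (usedIn L1 i ∧ usedIn L1 j) ∧
      ((MinChan L1 i ∧ MinChan L1 j) ∨ (MaxChan L1 i ∧ MaxChan L1 j)) ∧
      (∀ i' j' : Fin n, Joined L1 i i' → Joined L1 j j' → ¬ Joined L2 i' j')) :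
    Saturated L1 L2 := by
  have hL1 := h1.isGenLayer
  have hL2 := h2.isGenLayer
  refine ⟨hnr, ?_⟩
  rintro ⟨⟨i, j⟩, π, hij, hi, hj, hss⟩
  by_cases hJ : Joined L1 i j
  · have hmem : (i, j) ∈ L1 := hJ.resolve_right fun h => (h1.1 _ h).not_gt hij
    rw [outputs_insert_of_mem hL1 hL2 hmem hi hj] at hss
    exact not_ssubset_permSet π _ hss
  obtain ⟨-, hsame, hsep⟩ := h i j hij.ne hi hj hJ
  rcases hsame with ⟨⟨⟨_, i'⟩, hi', rfl⟩, ⟨⟨_, j'⟩, hj', rfl⟩⟩ |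
    ⟨⟨⟨i', _⟩, hi', rfl⟩, ⟨⟨j', _⟩, hj', rfl⟩⟩
  · exact not_outputs_insert_subset_of_minChan hL1 hL2 hij.ne hi hj hi' hj'
      (hsep i' j' (.inl hi') (.inl hj')) π hss.subset
  · exact not_outputs_insert_subset_of_maxChan hL1 hL2 hij.ne hi hj hi' hj'
      (hsep i' j' (.inr hi') (.inr hj')) π hss.subset

end SN
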